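/- Let $d \geq 3$ be a prime number and let $M$ be the $(d-1) \times (d-1)$ integer matrix defined by: $M_{ij} = -\sum_{r=0}^{i-1} \left(\!\binom{d}{r}\!\right)\left(\!\binom{d}{(j-i)+r}\!\right)$ if $i < j$; $M_{ij} = -\sum_{r=1}^{i-1} \left(\!\binom{d}{r}\!\right)^2$ if $i = j$; and $M_{ij} = -\sum_{r=1}^{j-1} \left(\!\binom{d}{(i-j)+r}\!\right)\left(\!\binom{d}{r}\!\right) + \left(\!\binom{d}{i-j}\!\right)$ if $i > j$. Then the $(\mathbb{Z}/d)$-linear map $(\mathbb{Z}/d)^{d-1} \to (\mathbb{Z}/d)^{d-1}$ induced by reducing $M$ modulo $d$ is the zero map; in particular its kernel is all of $(\mathbb{Z}/d)^{d-1}$ and its image is trivial, so both its kernel and its cokernel are isomorphic to $\bigoplus_{r=1}^{d-1} \mathbb{Z}/d$. -/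

import Mathlib

/-!
Every multicombination number `((d, r)) = C(d + r - 1, r)` with `0 < r < d` is divisible by the
prime `d`, since `d ≤ d + r - 1 < 2d`. Each summand of each entry of `M`, and the extra term
below the diagonal, carries such a factor, so `M` reduces to the zero matrix modulo `d`.
-/

open Finset

/-- The multicombination (multisubset) symbol $\left(\!\binom{d}{r}\!\right) = \binom{d+r-1}{r}$,
regarded as an integer. -/
def multicomb (d r : ℕ) : ℤ := ((d + r - 1).choose r : ℤ)

theorem Nat.Prime.dvd_multicomb {p r : ℕ} (hp : p.Prime) (hr0 : 0 < r) (hrp : r < p) :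
    (p : ℤ) ∣ multicomb p r := by
  unfold multicomb
  exact Int.natCast_dvd_natCast.mpr (hp.dvd_choose hrp (by omega) (by omega))

theorem multicomb_cast_eq_zero {p r : ℕ} (hp : p.Prime) (hr0 : 0 < r) (hrp : r < p) :
    (multicomb p r : ZMod p) = 0 :=
  (ZMod.intCast_zmod_eq_zero_iff_dvd _ p).mpr (hp.dvd_multicomb hr0 hrp)

section Entries

variable {p : ℕ} (hp : p.Prime) {i j : ℕ}
include hp

theorem cast_entry_above_diagonal_eq_zero (hj : j < p - 1) (hij : i < j) :
    ((-∑ r ∈ range (i + 1), multicomb p r * multicomb p (j - i + r) : ℤ) : ZMod p) = 0 := by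
  push_cast
  refine neg_eq_zero.mpr (sum_eq_zero fun r hr => ?_)
  rw [mem_range] at hr
  rcases r.eq_zero_or_pos with rfl | hr0
  · rw [multicomb_cast_eq_zero (r := j - i + 0) hp (by omega) (by omega), mul_zero]
  · rw [multicomb_cast_eq_zero hp hr0 (by omega), zero_mul]

theorem cast_entry_diagonal_eq_zero (hi : i < p - 1) :
    ((-∑ r ∈ Icc 1 i, multicomb p r ^ 2 : ℤ) : ZMod p) = 0 := by
  push_cast
  refine neg_eq_zero.mpr (sum_eq_zero fun r hr => ?_)
  rw [mem_Icc] at hr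
  rw [multicomb_cast_eq_zero hp hr.1 (by omega), zero_pow two_ne_zero]

theorem cast_entry_below_diagonal_eq_zero (hi : i < p - 1) (hji : j < i) :
    ((-∑ r ∈ Icc 1 j, multicomb p (i - j + r) * multicomb p r + multicomb p (i - j) : ℤ) :
      ZMod p) = 0 := by
  push_cast
  rw [multicomb_cast_eq_zero (r := i - j) hp (by omega) (by omega), add_zero]
  refine neg_eq_zero.mpr (sum_eq_zero fun r hr => ?_)
  rw [mem_Icc] at hr
  rw [multicomb_cast_eq_zero hp hr.1 (by omega), mul_zero]

end Entries

theorem LinearMap.ker_and_coker_of_eq_zero {R M N : Type*} [Ring R] [AddCommGroup M]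
    [AddCommGroup N] [Module R M] [Module R N] {f : M →ₗ[R] N} (hf : f = 0) :
    ker f = ⊤ ∧ range f = ⊥ ∧ Nonempty (ker f ≃ₗ[R] M) ∧ Nonempty ((N ⧸ range f) ≃ₗ[R] N) := by
  subst hf
  exact ⟨ker_zero, range_zero, ⟨(LinearEquiv.ofEq _ _ ker_zero).trans Submodule.topEquiv⟩,
    ⟨Submodule.quotEquivOfEqBot _ range_zero⟩⟩

theorem matrix_mod_d_zero_map_general (d : ℕ) (hd : Nat.Prime d)
    (M : Matrix (Fin (d - 1)) (Fin (d - 1)) ℤ)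
    (hM : ∀ i j : Fin (d - 1), M i j =
      if (i : ℕ) < (j : ℕ) then
        -∑ r ∈ Finset.range ((i : ℕ) + 1), multicomb d r * multicomb d (((j : ℕ) - (i : ℕ)) + r)
      else if (i : ℕ) = (j : ℕ) then
        -∑ r ∈ Finset.Icc 1 (i : ℕ), (multicomb d r) ^ 2
      else
        -∑ r ∈ Finset.Icc 1 (j : ℕ), multicomb d (((i : ℕ) - (j : ℕ)) + r) * multicomb d r
          + multicomb d ((i : ℕ) - (j : ℕ))) :
    Matrix.mulVecLin (M.map (Int.cast : ℤ → ZMod d)) = 0 ∧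
    LinearMap.ker (Matrix.mulVecLin (M.map (Int.cast : ℤ → ZMod d))) = ⊤ ∧
    LinearMap.range (Matrix.mulVecLin (M.map (Int.cast : ℤ → ZMod d))) = ⊥ ∧
    Nonempty ((LinearMap.ker (Matrix.mulVecLin (M.map (Int.cast : ℤ → ZMod d))))
      ≃ₗ[ZMod d] (Fin (d - 1) → ZMod d)) ∧
    Nonempty (((Fin (d - 1) → ZMod d) ⧸
        LinearMap.range (Matrix.mulVecLin (M.map (Int.cast : ℤ → ZMod d))))
      ≃ₗ[ZMod d] (Fin (d - 1) → ZMod d)) := by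
  have hM_mod : M.map (Int.cast : ℤ → ZMod d) = 0 := by
    ext i j
    rw [Matrix.map_apply, Matrix.zero_apply, hM i j]
    rcases lt_trichotomy (i : ℕ) j with hij | hij | hij
    · rw [if_pos hij, cast_entry_above_diagonal_eq_zero hd j.isLt hij]
    · rw [if_neg hij.not_lt, if_pos hij, cast_entry_diagonal_eq_zero hd i.isLt]
    · rw [if_neg hij.not_gt, if_neg hij.ne', cast_entry_below_diagonal_eq_zero hd i.isLt hij]
  have hzero : Matrix.mulVecLin (M.map (Int.cast : ℤ → ZMod d)) = 0 := by
    rw [hM_mod, Matrix.mulVecLin_zero]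
  exact ⟨hzero, LinearMap.ker_and_coker_of_eq_zero hzero⟩

/-- Let `d ≥ 3` be prime and let `M` be the `(d-1) × (d-1)` integer matrix of the paper
(indexed here by `Fin (d-1)`, corresponding to indices `1, …, d-1` via `i ↦ i.val + 1`).
Then the `ZMod d`-linear map `(ZMod d)^(d-1) → (ZMod d)^(d-1)` induced by reducing `M`
modulo `d` is zero; in particular its kernel is everything and its range is trivial, so
both the kernel and the cokernel are isomorphic to `⊕_{r=1}^{d-1} ZMod d`. -/
theorem matrix_mod_d_zero_map (d : ℕ) (hd : Nat.Prime d) (hd3 : 3 ≤ d)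
    (M : Matrix (Fin (d - 1)) (Fin (d - 1)) ℤ)
    (hM : ∀ i j : Fin (d - 1), M i j =
      if (i : ℕ) < (j : ℕ) then
        -∑ r ∈ Finset.range ((i : ℕ) + 1), multicomb d r * multicomb d (((j : ℕ) - (i : ℕ)) + r)
      else if (i : ℕ) = (j : ℕ) then
        -∑ r ∈ Finset.Icc 1 (i : ℕ), (multicomb d r) ^ 2
      else
        -∑ r ∈ Finset.Icc 1 (j : ℕ), multicomb d (((i : ℕ) - (j : ℕ)) + r) * multicomb d r
          + multicomb d ((i : ℕ) - (j : ℕ))) :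
    Matrix.mulVecLin (M.map (Int.cast : ℤ → ZMod d)) = 0 ∧
    LinearMap.ker (Matrix.mulVecLin (M.map (Int.cast : ℤ → ZMod d))) = ⊤ ∧
    LinearMap.range (Matrix.mulVecLin (M.map (Int.cast : ℤ → ZMod d))) = ⊥ ∧
    Nonempty ((LinearMap.ker (Matrix.mulVecLin (M.map (Int.cast : ℤ → ZMod d))))
      ≃ₗ[ZMod d] (Fin (d - 1) → ZMod d)) ∧
    Nonempty (((Fin (d - 1) → ZMod d) ⧸
        LinearMap.range (Matrix.mulVecLin (M.map (Int.cast : ℤ → ZMod d))))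
      ≃ₗ[ZMod d] (Fin (d - 1) → ZMod d)) :=
  matrix_mod_d_zero_map_general d hd M hM
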